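/- arXiv:1108.3170 — 2 statements merged into one kernel-verified Lean document; each statement's English description precedes it below -/
import Mathlib

section
/- Let μ = (μ₁,…,μ_r) be a partition of n such that some part μ_j is even. Then the sum over i = 0,…,n−1 of the irreducible character χ^{(n−i,1^i)} of S_n evaluated at a permutation of cycle type μ equals 0. -/
open MvPolynomial Finset

/-- The `i`-th part (0-indexed) of a partition given by its multiset of parts,
read off from the decreasingly sorted list of parts (0 if out of range). -/
def partNth (p : Multiset ℕ) (i : ℕ) : ℕ := (p.sort (· ≥ ·)).getD i 0

/-- The product of power sums `p_μ = ∏_j (x_1^{μ_j} + ⋯ + x_n^{μ_j})` in `n` variables. -/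
noncomputable def powerSumProd (n : ℕ) (mu : Multiset ℕ) : MvPolynomial (Fin n) ℤ :=
  (mu.map fun m => ∑ i : Fin n, (X i) ^ m).prod

/-- The Vandermonde product `∏_{i<j} (x_i - x_j)`. -/
noncomputable def vandermondePoly (n : ℕ) : MvPolynomial (Fin n) ℤ :=
  ∏ i : Fin n, ∏ j : Fin n, if i < j then (X i - X j) else 1

/-- The irreducible character `χ^λ(μ)` of `S_n`, defined via the classical formula:
`χ^λ(μ)` is the coefficient of `x^{λ+δ}` (with `δ = (n-1,…,1,0)`) in `a_δ · p_μ`. -/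
noncomputable def chi (n : ℕ) (lam mu : n.Partition) : ℤ :=
  MvPolynomial.coeff
    (Finsupp.equivFunOnFinite.symm fun i : Fin n => partNth lam.parts i.val + (n - 1 - i.val))
    (vandermondePoly n * powerSumProd n mu.parts)

/-- The hook partition `(n-i, 1^i)` of `n`. -/
def hookPartition (n i : ℕ) (h : i < n) : n.Partition where
  parts := (n - i) ::ₘ Multiset.replicate i 1
  parts_pos := by
    intro a ha
    rcases Multiset.mem_cons.mp ha with h1 | h1
    · omega
    · have := Multiset.eq_of_mem_replicate h1; omega
  parts_sum := by
    simp [Multiset.sum_replicate]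
    omega

/-- The cycle type of a permutation of `Fin n`, including the fixed points as parts `1`,
so that it is a partition of `n`. -/
def fullCycleType {n : ℕ} (σ : Equiv.Perm (Fin n)) : Multiset ℕ :=
  σ.cycleType + Multiset.replicate (n - σ.cycleType.sum) 1

/-- The cycle type of `σ ∈ S_n` as a partition of `n`. -/
def permPartition {n : ℕ} (σ : Equiv.Perm (Fin n)) : n.Partition where
  parts := fullCycleType σ
  parts_pos := by
    intro a ha
    rcases Multiset.mem_add.mp ha with h1 | h1
    · have := Equiv.Perm.two_le_of_mem_cycleType h1; omega
    · have := Multiset.eq_of_mem_replicate h1; omega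
  parts_sum := by
    have h1 : σ.cycleType.sum = σ.support.card := Equiv.Perm.sum_cycleType σ
    have h2 : σ.support.card ≤ n := by
      simpa using Finset.card_le_univ σ.support
    simp [fullCycleType, Multiset.sum_replicate]
    omega

/-- The Koszul sign of the action of `σ` on a basis tensor indexed by `f`,
where indices `≥ k` are the odd ones: `(-1)` for each inversion of `σ` at a pair
of odd positions. -/
def koszulSign (k l n : ℕ) (σ : Equiv.Perm (Fin n)) (f : Fin n → Fin (k + l)) : ℤ :=
  (-1) ^ (Finset.univ.filter fun p : Fin n × Fin n =>
      p.1 < p.2 ∧ σ p.2 < σ p.1 ∧ k ≤ (f p.1).val ∧ k ≤ (f p.2).val).card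

/-- The matrix of the super (signed) place-permutation action `φ*_{(k,ℓ),n}(σ)` on
`(V₀ ⊕ V₁)^{⊗n}`, with respect to the basis of homogeneous tensors `e_{f(1)} ⊗ ⋯ ⊗ e_{f(n)}`,
where `e_0,…,e_{k-1}` is a basis of `V₀` and `e_k,…,e_{k+ℓ-1}` a basis of `V₁`:
`σ` sends `e_f` to `koszulSign ⋅ e_{f ∘ σ⁻¹}`. -/
def superPermMatrix (k l n : ℕ) (σ : Equiv.Perm (Fin n)) :
    Matrix (Fin n → Fin (k + l)) (Fin n → Fin (k + l)) ℤ :=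
  fun g f => if g = f ∘ σ.symm then koszulSign k l n σ f else 0

/-- The number `s_{k,ℓ}(λ)` of `(k,ℓ)` semistandard tableaux of a given shape:
fillings by the alphabet `1 < ⋯ < k < 1' < ⋯ < ℓ'` (encoded as `Fin (k+ℓ)`,
with the primed/odd letters being those `≥ k`), weakly increasing along rows and columns,
strict along rows for primed letters and strict along columns for unprimed letters. -/
noncomputable def sSuper (k l : ℕ) (Y : YoungDiagram) : ℕ :=
  Nat.card {T : Y.cells → Fin (k + l) //
    (∀ c d : Y.cells, (c : ℕ × ℕ).1 = (d : ℕ × ℕ).1 → (d : ℕ × ℕ).2 = (c : ℕ × ℕ).2 + 1 →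
        T c ≤ T d) ∧
    (∀ c d : Y.cells, (c : ℕ × ℕ).1 = (d : ℕ × ℕ).1 → (d : ℕ × ℕ).2 = (c : ℕ × ℕ).2 + 1 →
        k ≤ (T c).val → T c < T d) ∧
    (∀ c d : Y.cells, (d : ℕ × ℕ).1 = (c : ℕ × ℕ).1 + 1 → (c : ℕ × ℕ).2 = (d : ℕ × ℕ).2 →
        T c ≤ T d) ∧
    (∀ c d : Y.cells, (d : ℕ × ℕ).1 = (c : ℕ × ℕ).1 + 1 → (c : ℕ × ℕ).2 = (d : ℕ × ℕ).2 →
        (T c).val < k → T c < T d)}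

/-- The Young diagram of a partition. -/
def toYoung {n : ℕ} (lam : n.Partition) : YoungDiagram :=
  YoungDiagram.ofRowLens (lam.parts.sort (· ≥ ·)) (Multiset.pairwise_sort _ _).sortedGE

/-! ### Auxiliary machinery for STATEMENT 1 -/

section HookAux

open Finsupp

private lemma finvalmk {n a : ℕ} (h : a < n) : ((⟨a, h⟩ : Fin n) : ℕ) = a := rfl

/-- The power-sum product is a symmetric polynomial. -/
private lemma rename_powerSumProd {n : ℕ} (σ : Equiv.Perm (Fin n)) (s : Multiset ℕ) :
    MvPolynomial.rename (⇑σ) (powerSumProd n s) = powerSumProd n s := by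
  unfold powerSumProd
  rw [map_multiset_prod, Multiset.map_map]
  congr 1
  apply Multiset.map_congr rfl
  intro m _
  simp only [Function.comp_apply, map_sum, map_pow, rename_X]
  exact Equiv.sum_comp σ (fun i => X i ^ m)

/-- The Vandermonde polynomial is alternating. -/
private lemma rename_vandermondePoly {n : ℕ} (σ : Equiv.Perm (Fin n)) :
    MvPolynomial.rename (⇑σ) (vandermondePoly n)
      = MvPolynomial.C ((Equiv.Perm.sign σ : ℤ)) * vandermondePoly n := by
  have hdet : vandermondePoly n
      = (∏ i : Fin n, ∏ _j ∈ Finset.Ioi i, (-1 : MvPolynomial (Fin n) ℤ)) *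
        (Matrix.vandermonde fun i : Fin n => (X i : MvPolynomial (Fin n) ℤ)).det := by
    rw [Matrix.det_vandermonde, ← Finset.prod_mul_distrib]
    unfold vandermondePoly
    refine Finset.prod_congr rfl fun i _ => ?_
    rw [← Finset.prod_mul_distrib]
    have h2 : ∀ j : Fin n, (if i < j then (X i - X j : MvPolynomial (Fin n) ℤ) else 1)
        = if j ∈ Finset.Ioi i then (-1) * (X j - X i) else 1 := fun j => by
      by_cases h : i < j
      · rw [if_pos h, if_pos (Finset.mem_Ioi.mpr h)]; ring
      · rw [if_neg h, if_neg (fun hc => h (Finset.mem_Ioi.mp hc))]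
    rw [Finset.prod_congr rfl fun j _ => h2 j, Finset.prod_ite_mem, Finset.univ_inter]
  have hc : MvPolynomial.rename (⇑σ)
        (∏ i : Fin n, ∏ _j ∈ Finset.Ioi i, (-1 : MvPolynomial (Fin n) ℤ))
      = ∏ i : Fin n, ∏ _j ∈ Finset.Ioi i, (-1 : MvPolynomial (Fin n) ℤ) := by
    simp
  have hd : MvPolynomial.rename (⇑σ)
        (Matrix.vandermonde fun i : Fin n => (X i : MvPolynomial (Fin n) ℤ)).det
      = MvPolynomial.C ((Equiv.Perm.sign σ : ℤ)) *
        (Matrix.vandermonde fun i : Fin n => (X i : MvPolynomial (Fin n) ℤ)).det := by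
    rw [AlgHom.map_det]
    have hsub : (MvPolynomial.rename (⇑σ)).mapMatrix
          (Matrix.vandermonde fun i : Fin n => (X i : MvPolynomial (Fin n) ℤ))
        = (Matrix.vandermonde fun i : Fin n => (X i : MvPolynomial (Fin n) ℤ)).submatrix (⇑σ) id := by
      ext a b
      simp [Matrix.vandermonde, Matrix.submatrix_apply]
    rw [hsub, Matrix.det_permute, eq_intCast (MvPolynomial.C : ℤ →+* MvPolynomial (Fin n) ℤ)]
  rw [hdet, map_mul, hc, hd]
  ring

/-- `a_δ · p_μ` is alternating, on the level of coefficients. -/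
private lemma coeff_alt {n : ℕ} (s : Multiset ℕ) (σ : Equiv.Perm (Fin n)) (w : Fin n → ℕ) :
    MvPolynomial.coeff (Finsupp.equivFunOnFinite.symm (w ∘ ⇑σ))
        (vandermondePoly n * powerSumProd n s)
      = (Equiv.Perm.sign σ : ℤ) *
        MvPolynomial.coeff (Finsupp.equivFunOnFinite.symm w)
          (vandermondePoly n * powerSumProd n s) := by
  have hG : MvPolynomial.rename (⇑σ) (vandermondePoly n * powerSumProd n s)
      = MvPolynomial.C ((Equiv.Perm.sign σ : ℤ)) * (vandermondePoly n * powerSumProd n s) := by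
    rw [map_mul, rename_vandermondePoly, rename_powerSumProd, mul_assoc]
  have h1 : Finsupp.mapDomain (⇑σ) (Finsupp.equivFunOnFinite.symm (w ∘ ⇑σ))
      = Finsupp.equivFunOnFinite.symm w := by
    ext b
    rw [Finsupp.mapDomain_equiv_apply]
    simp [Finsupp.coe_equivFunOnFinite_symm]
  have h2 := MvPolynomial.coeff_rename_mapDomain (⇑σ) σ.injective
    (vandermondePoly n * powerSumProd n s) (Finsupp.equivFunOnFinite.symm (w ∘ ⇑σ))
  rw [h1, hG, MvPolynomial.coeff_C_mul] at h2
  exact h2.symm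

private lemma coeff_swap_of_alt {n : ℕ} {G : MvPolynomial (Fin n) ℤ}
    (halt : ∀ (σ : Equiv.Perm (Fin n)) (w : Fin n → ℕ),
      MvPolynomial.coeff (Finsupp.equivFunOnFinite.symm (w ∘ ⇑σ)) G
        = (Equiv.Perm.sign σ : ℤ) * MvPolynomial.coeff (Finsupp.equivFunOnFinite.symm w) G)
    (a b : Fin n) (hab : a ≠ b) (w : Fin n → ℕ) :
    MvPolynomial.coeff (Finsupp.equivFunOnFinite.symm (w ∘ ⇑(Equiv.swap a b))) G
      = - MvPolynomial.coeff (Finsupp.equivFunOnFinite.symm w) G := by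
  rw [halt (Equiv.swap a b) w, Equiv.Perm.sign_swap hab]
  simp

private lemma coeff_dup_of_alt {n : ℕ} {G : MvPolynomial (Fin n) ℤ}
    (halt : ∀ (σ : Equiv.Perm (Fin n)) (w : Fin n → ℕ),
      MvPolynomial.coeff (Finsupp.equivFunOnFinite.symm (w ∘ ⇑σ)) G
        = (Equiv.Perm.sign σ : ℤ) * MvPolynomial.coeff (Finsupp.equivFunOnFinite.symm w) G)
    (w : Fin n → ℕ) (a b : Fin n) (hab : a ≠ b) (hw : w a = w b) :
    MvPolynomial.coeff (Finsupp.equivFunOnFinite.symm w) G = 0 := by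
  have h := coeff_swap_of_alt halt a b hab w
  have hcomp : w ∘ ⇑(Equiv.swap a b) = w := by
    funext jj
    simp only [Function.comp_apply, Equiv.swap_apply_def]
    split_ifs with h1 h2
    · rw [h1]; exact hw.symm
    · rw [h2]; exact hw
    · rfl
  rw [hcomp] at h
  omega

/-- Rotate the values of `w` on the index block `[a,b]`: position `a` receives `w b`,
and each position `a < j ≤ b` receives `w (j-1)`. -/
private def rotVec {n : ℕ} (w : Fin n → ℕ) (a b : Fin n) : Fin n → ℕ := fun j =>
  if (j : ℕ) = (a : ℕ) then w b
  else if (a : ℕ) < (j : ℕ) ∧ (j : ℕ) ≤ (b : ℕ) then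
    w ⟨(j : ℕ) - 1, lt_of_le_of_lt (Nat.sub_le _ _) j.isLt⟩
  else w j

private lemma coeff_rotVec_of_alt {n : ℕ} {G : MvPolynomial (Fin n) ℤ}
    (halt : ∀ (σ : Equiv.Perm (Fin n)) (w : Fin n → ℕ),
      MvPolynomial.coeff (Finsupp.equivFunOnFinite.symm (w ∘ ⇑σ)) G
        = (Equiv.Perm.sign σ : ℤ) * MvPolynomial.coeff (Finsupp.equivFunOnFinite.symm w) G) :
    ∀ (k : ℕ) (a b : Fin n), ((b : ℕ) = (a : ℕ) + k) → ∀ (w : Fin n → ℕ),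
      MvPolynomial.coeff (Finsupp.equivFunOnFinite.symm (rotVec w a b)) G
        = (-1) ^ k * MvPolynomial.coeff (Finsupp.equivFunOnFinite.symm w) G := by
  intro k
  induction k with
  | zero =>
      intro a b hab w
      have hba : b = a := Fin.ext (by omega)
      subst hba
      have hrot : rotVec w b b = w := by
        funext jj
        simp only [rotVec]
        split_ifs with h1 h2
        · exact congrArg w (Fin.ext h1).symm ▸ rfl
        · exact absurd (lt_of_lt_of_le h2.1 h2.2) (lt_irrefl _)
        · rfl
      rw [hrot, pow_zero, one_mul]
  | succ k ih =>
      intro a b hab w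
      have hb := b.isLt
      have ha1 : (a : ℕ) + 1 < n := by omega
      have haa' : a ≠ (⟨(a : ℕ) + 1, ha1⟩ : Fin n) := by
        intro hcon
        have := congrArg Fin.val hcon
        simp only [finvalmk] at this
        omega
      have hdecomp : rotVec w a b
          = (rotVec w ⟨(a : ℕ) + 1, ha1⟩ b) ∘ ⇑(Equiv.swap a ⟨(a : ℕ) + 1, ha1⟩) := by
        funext jj
        have hjj := jj.isLt
        simp only [Function.comp_apply, Equiv.swap_apply_def]
        by_cases h1 : jj = a
        · rw [if_pos h1]
          show rotVec w a b jj = rotVec w ⟨(a : ℕ) + 1, ha1⟩ b ⟨(a : ℕ) + 1, ha1⟩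
          simp only [rotVec, finvalmk]
          rw [if_pos (show (jj : ℕ) = (a : ℕ) by rw [h1])]
          simp
        · rw [if_neg h1]
          by_cases h2 : jj = (⟨(a : ℕ) + 1, ha1⟩ : Fin n)
          · rw [if_pos h2]
            show rotVec w a b jj = rotVec w ⟨(a : ℕ) + 1, ha1⟩ b a
            have hv2 : (jj : ℕ) = (a : ℕ) + 1 := by rw [h2]
            simp only [rotVec, finvalmk]
            rw [if_neg (by omega), if_pos (by constructor <;> omega),
                if_neg (by omega), if_neg (by omega)]
            exact congrArg w (Fin.ext (by simp only [finvalmk]; omega))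
          · rw [if_neg h2]
            have hv1 : (jj : ℕ) ≠ (a : ℕ) := fun hh => h1 (Fin.ext hh)
            have hv2 : (jj : ℕ) ≠ (a : ℕ) + 1 := fun hh =>
              h2 (Fin.ext (by simp only [finvalmk]; omega))
            simp only [rotVec, finvalmk]
            rw [if_neg hv1, if_neg hv2]
            by_cases h3 : (a : ℕ) < (jj : ℕ) ∧ (jj : ℕ) ≤ (b : ℕ)
            · rw [if_pos h3, if_pos (by omega)]
            · rw [if_neg h3, if_neg (by omega)]
      rw [hdecomp, coeff_swap_of_alt halt a _ haa',
        ih ⟨(a : ℕ) + 1, ha1⟩ b (by simp only [finvalmk]; omega) w, pow_succ]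
      ring

/-- Subtracting a `single` from a finitely supported exponent vector, functionally. -/
private lemma symm_sub_single {n : ℕ} (w : Fin n → ℕ) (j : Fin n) (m : ℕ) :
    Finsupp.equivFunOnFinite.symm w - Finsupp.single j m
      = Finsupp.equivFunOnFinite.symm
          (fun k : Fin n => if (k : ℕ) = (j : ℕ) then w j - m else w k) := by
  ext k
  rw [Finsupp.tsub_apply, Finsupp.coe_equivFunOnFinite_symm,
    Finsupp.coe_equivFunOnFinite_symm]
  rcases eq_or_ne k j with rfl | hkj
  · rw [if_pos rfl, Finsupp.single_eq_same]
  · rw [if_neg (fun h => hkj (Fin.ext h)), Finsupp.single_eq_of_ne hkj, Nat.sub_zero]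

/-- The exponent vector `λ + δ` for the hook `λ = (n-i,1^i)`. -/
private def vf (n i : ℕ) : Fin n → ℕ := fun k =>
  (if (k : ℕ) = 0 then n - i else if (k : ℕ) ≤ i then 1 else 0) + (n - 1 - (k : ℕ))

/-- The common sorted exponent vector appearing after subtracting `m`. -/
private def uf (n m i0 : ℕ) : Fin n → ℕ := fun k =>
  if (k : ℕ) = 0 then 2 * n - 1 - (i0 + m)
  else if (k : ℕ) ≤ i0 then n - (k : ℕ) else n - 1 - (k : ℕ)

/-- The staircase vector `δ = (n-1, …, 1, 0)`. -/
private def df (n : ℕ) : Fin n → ℕ := fun k => n - 1 - (k : ℕ)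

private lemma partNth_hook (n i : ℕ) (h : i < n) (t : ℕ) :
    partNth (hookPartition n i h).parts t = if t = 0 then n - i else if t ≤ i then 1 else 0 := by
  have hparts : (hookPartition n i h).parts = (((n - i) :: List.replicate i 1 : List ℕ) : Multiset ℕ) := by
    show (n - i) ::ₘ Multiset.replicate i 1 = _
    rw [← Multiset.cons_coe, Multiset.coe_replicate]
  have hsort : Multiset.sort (hookPartition n i h).parts (· ≥ ·)
      = (n - i) :: List.replicate i 1 := by
    refine List.Perm.eq_of_pairwise' (r := ((· ≥ ·) : ℕ → ℕ → Prop)) ?_ ?_ ?_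
    · exact Multiset.pairwise_sort _ _
    · refine List.pairwise_cons.mpr ⟨?_, ?_⟩
      · intro b hb
        rw [List.eq_of_mem_replicate hb]
        omega
      · exact List.pairwise_replicate.mpr (Or.inr (le_refl 1))
    · rw [← Multiset.coe_eq_coe, Multiset.sort_eq, hparts]
  unfold partNth
  rw [hsort]
  cases t with
  | zero => simp [List.getD_cons_zero]
  | succ t =>
    rw [List.getD_cons_succ, if_neg (Nat.succ_ne_zero t)]
    by_cases ht : t < i
    · rw [if_pos (by omega), List.getD_eq_getElem _ _ (by simpa using ht)]
      simp
    · rw [if_neg (by omega)]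
      apply List.getD_eq_default
      simpa using ht

end HookAux

section HookClassify

/-- Classification of the contribution of variable `j` to the hook-`i` character,
when `m < n`. -/
private lemma classify_lt {n : ℕ} (m : ℕ) (hn : 0 < n) (hm2 : 2 ≤ m) (hme : Even m)
    (hmn : m < n) {G : MvPolynomial (Fin n) ℤ}
    (halt : ∀ (σ : Equiv.Perm (Fin n)) (w : Fin n → ℕ),
      MvPolynomial.coeff (Finsupp.equivFunOnFinite.symm (w ∘ ⇑σ)) G
        = (Equiv.Perm.sign σ : ℤ) * MvPolynomial.coeff (Finsupp.equivFunOnFinite.symm w) G)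
    (i j : Fin n) :
    (if Finsupp.single j m ≤ Finsupp.equivFunOnFinite.symm (vf n (i : ℕ)) then
        MvPolynomial.coeff (Finsupp.equivFunOnFinite.symm (vf n (i : ℕ)) - Finsupp.single j m) G
      else 0)
      = (if (j : ℕ) = 0 ∧ (i : ℕ) + m < n then
            MvPolynomial.coeff (Finsupp.equivFunOnFinite.symm (uf n m (i : ℕ))) G else 0)
        + (if (j : ℕ) + m = (i : ℕ) + 1 ∧ (j : ℕ) ≠ 0 then
            - MvPolynomial.coeff (Finsupp.equivFunOnFinite.symm (uf n m ((i : ℕ) - m))) G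
          else 0) := by
  have hi := i.isLt
  have hj := j.isLt
  simp only [Finsupp.single_le_iff, Finsupp.coe_equivFunOnFinite_symm, symm_sub_single]
  by_cases hj0 : (j : ℕ) = 0
  · have hvj0 : vf n (i : ℕ) j = (n - (i : ℕ)) + (n - 1 - (j : ℕ)) := by
      simp only [vf]
      rw [if_pos hj0]
    have hvj : vf n (i : ℕ) j = (n - (i : ℕ)) + (n - 1) := by
      rw [hvj0]; omega
    have hcond : m ≤ vf n (i : ℕ) j := by rw [hvj]; omega
    rw [if_pos hcond]
    by_cases hA : (i : ℕ) + m < n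
    · rw [if_pos (show (j : ℕ) = 0 ∧ (i : ℕ) + m < n from ⟨hj0, hA⟩),
        if_neg (show ¬((j : ℕ) + m = (i : ℕ) + 1 ∧ (j : ℕ) ≠ 0) from fun hcon => hcon.2 hj0),
        add_zero]
      have hweq : (fun k : Fin n =>
            if (k : ℕ) = (j : ℕ) then vf n (i : ℕ) j - m else vf n (i : ℕ) k)
          = uf n m (i : ℕ) := by
        funext k
        have hk := k.isLt
        simp only [vf, uf, hj0]
        split_ifs <;> omega
      rw [hweq]
    · rw [if_neg (show ¬((j : ℕ) = 0 ∧ (i : ℕ) + m < n) from fun hcon => hA hcon.2),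
        if_neg (show ¬((j : ℕ) + m = (i : ℕ) + 1 ∧ (j : ℕ) ≠ 0) from fun hcon => hcon.2 hj0),
        add_zero]
      refine coeff_dup_of_alt halt _ j ⟨(i : ℕ) + m + 1 - n, by omega⟩ (fun hcon => ?_) ?_
      · have hcv := congrArg Fin.val hcon
        simp only [finvalmk, hj0] at hcv
        omega
      · simp only [vf, finvalmk, hj0]
        split_ifs <;> omega
  · have hj1 : 1 ≤ (j : ℕ) := Nat.one_le_iff_ne_zero.mpr hj0
    rw [if_neg (show ¬((j : ℕ) = 0 ∧ (i : ℕ) + m < n) from fun hcon => hj0 hcon.1), zero_add]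
    have hval : vf n (i : ℕ) j = (if (j : ℕ) ≤ (i : ℕ) then 1 else 0) + (n - 1 - (j : ℕ)) := by
      simp only [vf]
      rw [if_neg hj0]
    by_cases hB : (j : ℕ) + m = (i : ℕ) + 1
    · have hji : (j : ℕ) ≤ (i : ℕ) := by omega
      have hcond : m ≤ vf n (i : ℕ) j := by rw [hval, if_pos hji]; omega
      rw [if_pos hcond,
        if_pos (show (j : ℕ) + m = (i : ℕ) + 1 ∧ (j : ℕ) ≠ 0 from ⟨hB, hj0⟩)]
      have hweq : (fun k : Fin n =>
            if (k : ℕ) = (j : ℕ) then vf n (i : ℕ) j - m else vf n (i : ℕ) k)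
          = rotVec (uf n m ((i : ℕ) - m)) j ⟨(i : ℕ), i.isLt⟩ := by
        funext k
        have hk := k.isLt
        simp only [vf, uf, rotVec, finvalmk]
        split_ifs <;> omega
      rw [hweq, coeff_rotVec_of_alt halt (m - 1) j ⟨(i : ℕ), i.isLt⟩
          (by simp only [finvalmk]; omega) (uf n m ((i : ℕ) - m)),
        Odd.neg_one_pow (Nat.Even.sub_odd (by omega) hme odd_one), neg_one_mul]
    · rw [if_neg (show ¬((j : ℕ) + m = (i : ℕ) + 1 ∧ (j : ℕ) ≠ 0) from fun hcon => hB hcon.1)]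
      by_cases hcond : m ≤ vf n (i : ℕ) j
      · rw [if_pos hcond]
        rw [hval] at hcond
        by_cases hji : (j : ℕ) ≤ (i : ℕ)
        · rw [if_pos hji] at hcond
          by_cases hc2 : (j : ℕ) + m ≤ (i : ℕ)
          · refine coeff_dup_of_alt halt _ j ⟨(j : ℕ) + m, by omega⟩ (fun hcon => ?_) ?_
            · have hcv := congrArg Fin.val hcon
              simp only [finvalmk] at hcv
              omega
            · simp only [vf, finvalmk]
              split_ifs <;> omega
          · refine coeff_dup_of_alt halt _ j ⟨(j : ℕ) + m - 1, by omega⟩ (fun hcon => ?_) ?_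
            · have hcv := congrArg Fin.val hcon
              simp only [finvalmk] at hcv
              omega
            · simp only [vf, finvalmk]
              split_ifs <;> omega
        · rw [if_neg hji] at hcond
          refine coeff_dup_of_alt halt _ j ⟨(j : ℕ) + m, by omega⟩ (fun hcon => ?_) ?_
          · have hcv := congrArg Fin.val hcon
            simp only [finvalmk] at hcv
            omega
          · simp only [vf, finvalmk]
            split_ifs <;> omega
      · rw [if_neg hcond]

/-- Classification when `m = n`. -/
private lemma classify_eq {n : ℕ} (m : ℕ) (hn : 0 < n) (hm2 : 2 ≤ m) (hmn : m = n)
    {G : MvPolynomial (Fin n) ℤ}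
    (halt : ∀ (σ : Equiv.Perm (Fin n)) (w : Fin n → ℕ),
      MvPolynomial.coeff (Finsupp.equivFunOnFinite.symm (w ∘ ⇑σ)) G
        = (Equiv.Perm.sign σ : ℤ) * MvPolynomial.coeff (Finsupp.equivFunOnFinite.symm w) G)
    (i j : Fin n) :
    (if Finsupp.single j m ≤ Finsupp.equivFunOnFinite.symm (vf n (i : ℕ)) then
        MvPolynomial.coeff (Finsupp.equivFunOnFinite.symm (vf n (i : ℕ)) - Finsupp.single j m) G
      else 0)
      = if (j : ℕ) = 0 then
          (-1) ^ (i : ℕ) * MvPolynomial.coeff (Finsupp.equivFunOnFinite.symm (df n)) G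
        else 0 := by
  have hi := i.isLt
  have hj := j.isLt
  simp only [Finsupp.single_le_iff, Finsupp.coe_equivFunOnFinite_symm, symm_sub_single]
  by_cases hj0 : (j : ℕ) = 0
  · rw [if_pos hj0]
    have hvj0 : vf n (i : ℕ) j = (n - (i : ℕ)) + (n - 1 - (j : ℕ)) := by
      simp only [vf]
      rw [if_pos hj0]
    have hvj : vf n (i : ℕ) j = (n - (i : ℕ)) + (n - 1) := by
      rw [hvj0]; omega
    rw [if_pos (show m ≤ vf n (i : ℕ) j by rw [hvj]; omega)]
    have hweq : (fun k : Fin n =>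
          if (k : ℕ) = (j : ℕ) then vf n (i : ℕ) j - m else vf n (i : ℕ) k)
        = rotVec (df n) ⟨0, hn⟩ ⟨(i : ℕ), i.isLt⟩ := by
      funext k
      have hk := k.isLt
      simp only [vf, df, rotVec, finvalmk, hj0]
      split_ifs <;> omega
    rw [hweq, coeff_rotVec_of_alt halt (i : ℕ) ⟨0, hn⟩ ⟨(i : ℕ), i.isLt⟩
        (by simp only [finvalmk]; omega) (df n)]
  · rw [if_neg hj0]
    have hle : vf n (i : ℕ) j ≤ n - 1 := by
      simp only [vf]
      rw [if_neg hj0]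
      split_ifs <;> omega
    rw [if_neg (show ¬ m ≤ vf n (i : ℕ) j by omega)]

end HookClassify

/-- if some part of `μ ⊢ n` is even, then
`Σ_{i=0}^{n-1} χ^{(n-i,1^i)}(μ) = 0`. -/
theorem hook_char_sum_even (n : ℕ) (hn : 0 < n) (mu : n.Partition)
    (heven : ∃ m ∈ mu.parts, Even m) :
    ∑ i : Fin n, chi n (hookPartition n i i.isLt) mu = 0 := by
  classical
  obtain ⟨m, hm, hme⟩ := heven
  have hm1 : 0 < m := mu.parts_pos hm
  have hm2 : 2 ≤ m := by
    rcases hme with ⟨r, hr⟩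
    omega
  have hmn : m ≤ n := by
    have h := Multiset.single_le_sum (fun x _ => Nat.zero_le x) m hm
    rwa [mu.parts_sum] at h
  obtain ⟨G, hG⟩ : ∃ G : MvPolynomial (Fin n) ℤ,
      G = vandermondePoly n * powerSumProd n (mu.parts.erase m) := ⟨_, rfl⟩
  have halt : ∀ (σ : Equiv.Perm (Fin n)) (w : Fin n → ℕ),
      MvPolynomial.coeff (Finsupp.equivFunOnFinite.symm (w ∘ ⇑σ)) G
        = (Equiv.Perm.sign σ : ℤ) * MvPolynomial.coeff (Finsupp.equivFunOnFinite.symm w) G := by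
    rw [hG]
    exact fun σ w => coeff_alt (mu.parts.erase m) σ w
  have hsplit : vandermondePoly n * powerSumProd n mu.parts
      = G * ∑ j : Fin n, (X j : MvPolynomial (Fin n) ℤ) ^ m := by
    conv_lhs => rw [← Multiset.cons_erase hm]
    rw [hG]
    unfold powerSumProd
    rw [Multiset.map_cons, Multiset.prod_cons]
    ring
  have hchi : ∀ i : Fin n, chi n (hookPartition n (i : ℕ) i.isLt) mu
      = ∑ j : Fin n, (if Finsupp.single j m ≤ Finsupp.equivFunOnFinite.symm (vf n (i : ℕ)) then
          MvPolynomial.coeff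
            (Finsupp.equivFunOnFinite.symm (vf n (i : ℕ)) - Finsupp.single j m) G
        else 0) := by
    intro i
    unfold chi
    have hfun : (fun k : Fin n => partNth (hookPartition n (i : ℕ) i.isLt).parts (k : ℕ)
          + (n - 1 - (k : ℕ))) = vf n (i : ℕ) := by
      funext k
      rw [partNth_hook]
      rfl
    rw [hfun, hsplit, Finset.mul_sum, MvPolynomial.coeff_sum]
    refine Finset.sum_congr rfl fun j _ => ?_
    rw [MvPolynomial.X_pow_eq_monomial, MvPolynomial.coeff_mul_monomial']
    simp only [mul_one]
  rcases lt_or_eq_of_le hmn with hlt | heq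
  · -- the case m < n
    have h1 : ∀ i : Fin n, chi n (hookPartition n (i : ℕ) i.isLt) mu
        = (if (i : ℕ) + m < n then
              MvPolynomial.coeff (Finsupp.equivFunOnFinite.symm (uf n m (i : ℕ))) G else 0)
          + (if m ≤ (i : ℕ) then
              - MvPolynomial.coeff (Finsupp.equivFunOnFinite.symm (uf n m ((i : ℕ) - m))) G
            else 0) := by
      intro i
      have hi := i.isLt
      rw [hchi i,
        Finset.sum_congr rfl (fun j _ => classify_lt m hn hm2 hme hlt halt i j),
        Finset.sum_add_distrib]
      congr 1
      · rw [Finset.sum_eq_single (⟨0, hn⟩ : Fin n)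
            (fun b _ hb => if_neg (fun hcon => hb (Fin.ext hcon.1)))
            (fun hcon => absurd (Finset.mem_univ _) hcon)]
        simp
      · by_cases hmi : m ≤ (i : ℕ)
        · rw [if_pos hmi,
            Finset.sum_eq_single (⟨(i : ℕ) + 1 - m, by omega⟩ : Fin n)
              (fun b _ hb => if_neg (fun hcon => hb (Fin.ext (by
                have hc1 := hcon.1
                have hc2 := hcon.2
                simp only [finvalmk]
                omega))))
              (fun hcon => absurd (Finset.mem_univ _) hcon)]
          rw [if_pos ⟨by simp only [finvalmk]; omega, by simp only [finvalmk]; omega⟩]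
        · rw [if_neg hmi]
          apply Finset.sum_eq_zero
          intro b _
          refine if_neg (fun hcon => hmi ?_)
          have hb := b.isLt
          have hc1 := hcon.1
          have hc2 := hcon.2
          omega
    rw [Finset.sum_congr rfl (fun i _ => h1 i), Finset.sum_add_distrib]
    have e1 : (∑ i : Fin n, if (i : ℕ) + m < n then
          MvPolynomial.coeff (Finsupp.equivFunOnFinite.symm (uf n m (i : ℕ))) G else 0)
        = ∑ t ∈ Finset.range (n - m),
            MvPolynomial.coeff (Finsupp.equivFunOnFinite.symm (uf n m t)) G := by
      rw [Fin.sum_univ_eq_sum_range (fun t => if t + m < n then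
          MvPolynomial.coeff (Finsupp.equivFunOnFinite.symm (uf n m t)) G else 0) n,
        ← Finset.sum_filter]
      congr 1
      ext t
      simp only [Finset.mem_filter, Finset.mem_range]
      omega
    have e2 : (∑ i : Fin n, if m ≤ (i : ℕ) then
          - MvPolynomial.coeff (Finsupp.equivFunOnFinite.symm (uf n m ((i : ℕ) - m))) G else 0)
        = - ∑ t ∈ Finset.range (n - m),
            MvPolynomial.coeff (Finsupp.equivFunOnFinite.symm (uf n m t)) G := by
      rw [Fin.sum_univ_eq_sum_range (fun t => if m ≤ t then
          - MvPolynomial.coeff (Finsupp.equivFunOnFinite.symm (uf n m (t - m))) G else 0) n,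
        ← Finset.sum_filter]
      have hf : Finset.filter (fun t => m ≤ t) (Finset.range n) = Finset.Ico m n := by
        ext t
        simp only [Finset.mem_filter, Finset.mem_range, Finset.mem_Ico]
        omega
      rw [hf, Finset.sum_Ico_eq_sum_range]
      have hcong : ∀ t ∈ Finset.range (n - m),
          - MvPolynomial.coeff (Finsupp.equivFunOnFinite.symm (uf n m (m + t - m))) G
            = - MvPolynomial.coeff (Finsupp.equivFunOnFinite.symm (uf n m t)) G := by
        intro t _
        rw [Nat.add_sub_cancel_left]
      rw [Finset.sum_congr rfl hcong, Finset.sum_neg_distrib]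
    rw [e1, e2]
    exact add_neg_cancel _
  · -- the case m = n
    have h1 : ∀ i : Fin n, chi n (hookPartition n (i : ℕ) i.isLt) mu
        = (-1) ^ (i : ℕ) * MvPolynomial.coeff (Finsupp.equivFunOnFinite.symm (df n)) G := by
      intro i
      rw [hchi i, Finset.sum_congr rfl (fun j _ => classify_eq m hn hm2 heq halt i j),
        Finset.sum_eq_single (⟨0, hn⟩ : Fin n)
          (fun b _ hb => if_neg (fun hcon => hb (Fin.ext hcon)))
          (fun hcon => absurd (Finset.mem_univ _) hcon)]
      rw [if_pos rfl]
    rw [Finset.sum_congr rfl (fun i _ => h1 i), ← Finset.sum_mul,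
      Fin.sum_univ_eq_sum_range (fun t => ((-1 : ℤ)) ^ t) n, neg_one_geom_sum,
      if_pos (heq ▸ hme), zero_mul]
end

section
/- For a partition λ of n with λ₃ ≤ 1 and λ₂ ≥ 1 (i.e., λ lies in the (2,1)-hook and contains the 2×1 rectangle), the number of (2,1) semi-standard tableaux of shape λ satisfies s_{2,1}(λ) = 4(λ₁ − λ₂ + 1). -/
open MvPolynomial Finset

def hf0 (a p ε j : ℕ) : Fin 3 := if j < p then 0 else if j < a - ε then 1 else 2
def hf1 (b ε' j : ℕ) : Fin 3 := if j < b - ε' then 1 else 2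

def mkTab (Y : YoungDiagram) (a b p ε ε' : ℕ) : Y.cells → Fin 3 := fun c =>
  if (c : ℕ × ℕ).1 = 0 then hf0 a p ε (c : ℕ × ℕ).2
  else if (c : ℕ × ℕ).1 = 1 then hf1 b ε' (c : ℕ × ℕ).2
  else 2

lemma lowerSet_eq_range (S : Finset ℕ) (h : ∀ j' ∈ S, ∀ j, j ≤ j' → j ∈ S) :
    S = Finset.range S.card := by
  ext j
  simp only [Finset.mem_range]
  constructor
  · intro hj
    have hsub : Finset.range (j + 1) ⊆ S := by
      intro x hx
      exact h j hj x (Nat.lt_succ_iff.mp (Finset.mem_range.mp hx))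
    have h1 : j + 1 ≤ S.card := by simpa using Finset.card_le_card hsub
    omega
  · intro hj
    by_contra hjS
    have hsub : S ⊆ Finset.range j := by
      intro x hx
      simp only [Finset.mem_range]
      by_contra hx'
      exact hjS (h x hx j (by omega))
    have := Finset.card_le_card hsub
    simp only [Finset.card_range] at this
    omega

lemma count_interval (a c e : ℕ) (he : e ≤ a) :
    (∑ p : Fin (a + 1), if c ≤ p.val ∧ p.val + e ≤ a then 1 else 0) = a + 1 - e - c := by
  rw [Fin.sum_univ_eq_sum_range (fun j => if c ≤ j ∧ j + e ≤ a then 1 else 0)]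
  rw [← Finset.card_filter]
  have heq : (Finset.range (a + 1)).filter (fun j => c ≤ j ∧ j + e ≤ a) = Finset.Icc c (a - e) := by
    ext x
    simp only [Finset.mem_filter, Finset.mem_range, Finset.mem_Icc]
    omega
  rw [heq, Nat.card_Icc]
  omega

lemma hf0_inj (a : ℕ) (ha : 1 ≤ a) (p₁ ε₁ p₂ ε₂ : ℕ) (he₁ : ε₁ ≤ 1) (he₂ : ε₂ ≤ 1)
    (hp₁ : p₁ + ε₁ ≤ a) (hp₂ : p₂ + ε₂ ≤ a)
    (h : ∀ j < a, hf0 a p₁ ε₁ j = hf0 a p₂ ε₂ j) : p₁ = p₂ ∧ ε₁ = ε₂ := by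
  have key : ∀ q₁ e₁ q₂ e₂ : ℕ, e₁ ≤ 1 → q₁ + e₁ ≤ a → q₂ + e₂ ≤ a →
      (∀ j < a, hf0 a q₁ e₁ j = hf0 a q₂ e₂ j) → q₂ ≤ q₁ := by
    intro q₁ e₁ q₂ e₂ he1 hq1 hq2 hh
    by_contra hc
    have hj := hh q₁ (by omega)
    simp only [hf0] at hj
    split_ifs at hj <;> omega
  have hpe : p₁ = p₂ := le_antisymm (key p₂ ε₂ p₁ ε₁ he₂ hp₂ hp₁ (fun j hj => (h j hj).symm))
    (key p₁ ε₁ p₂ ε₂ he₁ hp₁ hp₂ h)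
  subst hpe
  refine ⟨rfl, ?_⟩
  have hj := h (a - 1) (by omega)
  simp only [hf0] at hj
  split_ifs at hj <;> omega

lemma hf1_inj (b : ℕ) (hb : 1 ≤ b) (ε₁ ε₂ : ℕ) (he₁ : ε₁ ≤ 1) (he₂ : ε₂ ≤ 1)
    (h : hf1 b ε₁ (b - 1) = hf1 b ε₂ (b - 1)) : ε₁ = ε₂ := by
  simp only [hf1] at h
  split_ifs at h <;> omega

def uOf (Y : YoungDiagram) (T : Y.cells → Fin 3) (i j : ℕ) : ℕ :=
  if h : (i, j) ∈ Y then (T ⟨(i, j), (YoungDiagram.mem_cells _).mpr h⟩).val else 2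

lemma uOf_pos (Y : YoungDiagram) (T : Y.cells → Fin 3) {i j : ℕ} (h : (i, j) ∈ Y) :
    uOf Y T i j = (T ⟨(i, j), (YoungDiagram.mem_cells _).mpr h⟩).val := dif_pos h

lemma uOf_lt3 (Y : YoungDiagram) (T : Y.cells → Fin 3) (i j : ℕ) : uOf Y T i j < 3 := by
  unfold uOf
  split
  · exact (T _).is_lt
  · omega

section conds

variable {Y : YoungDiagram} {T : Y.cells → Fin 3}

lemma row_step
    (hT1 : ∀ c d : Y.cells, (c : ℕ × ℕ).1 = (d : ℕ × ℕ).1 → (d : ℕ × ℕ).2 = (c : ℕ × ℕ).2 + 1 →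
        T c ≤ T d)
    (hT2 : ∀ c d : Y.cells, (c : ℕ × ℕ).1 = (d : ℕ × ℕ).1 → (d : ℕ × ℕ).2 = (c : ℕ × ℕ).2 + 1 →
        2 ≤ (T c).val → T c < T d)
    {i j : ℕ} (h : (i, j + 1) ∈ Y) :
    uOf Y T i j ≤ uOf Y T i (j + 1) ∧ uOf Y T i j ≤ 1 := by
  have hj : (i, j) ∈ Y := Y.up_left_mem le_rfl (Nat.le_succ j) h
  have l1 := hT1 ⟨(i, j), (YoungDiagram.mem_cells _).mpr hj⟩
    ⟨(i, j + 1), (YoungDiagram.mem_cells _).mpr h⟩ rfl rfl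
  have l2 := hT2 ⟨(i, j), (YoungDiagram.mem_cells _).mpr hj⟩
    ⟨(i, j + 1), (YoungDiagram.mem_cells _).mpr h⟩ rfl rfl
  rw [uOf_pos Y T hj, uOf_pos Y T h]
  rw [Fin.le_def] at l1
  simp only [Fin.lt_def] at l2
  have h3 := (T ⟨(i, j + 1), (YoungDiagram.mem_cells _).mpr h⟩).is_lt
  omega

lemma col_step
    (hT3 : ∀ c d : Y.cells, (d : ℕ × ℕ).1 = (c : ℕ × ℕ).1 + 1 → (c : ℕ × ℕ).2 = (d : ℕ × ℕ).2 →
        T c ≤ T d)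
    (hT4 : ∀ c d : Y.cells, (d : ℕ × ℕ).1 = (c : ℕ × ℕ).1 + 1 → (c : ℕ × ℕ).2 = (d : ℕ × ℕ).2 →
        (T c).val < 2 → T c < T d)
    {i j : ℕ} (h : (i + 1, j) ∈ Y) :
    uOf Y T i j ≤ uOf Y T (i + 1) j ∧ (uOf Y T i j < 2 → uOf Y T i j < uOf Y T (i + 1) j) := by
  have hi : (i, j) ∈ Y := Y.up_left_mem (Nat.le_succ i) le_rfl h
  have l1 := hT3 ⟨(i, j), (YoungDiagram.mem_cells _).mpr hi⟩
    ⟨(i + 1, j), (YoungDiagram.mem_cells _).mpr h⟩ rfl rfl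
  have l2 := hT4 ⟨(i, j), (YoungDiagram.mem_cells _).mpr hi⟩
    ⟨(i + 1, j), (YoungDiagram.mem_cells _).mpr h⟩ rfl rfl
  rw [uOf_pos Y T hi, uOf_pos Y T h]
  rw [Fin.le_def] at l1
  simp only [Fin.lt_def] at l2
  omega

lemma row_mono
    (hT1 : ∀ c d : Y.cells, (c : ℕ × ℕ).1 = (d : ℕ × ℕ).1 → (d : ℕ × ℕ).2 = (c : ℕ × ℕ).2 + 1 →
        T c ≤ T d)
    (hT2 : ∀ c d : Y.cells, (c : ℕ × ℕ).1 = (d : ℕ × ℕ).1 → (d : ℕ × ℕ).2 = (c : ℕ × ℕ).2 + 1 →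
        2 ≤ (T c).val → T c < T d)
    {i j j' : ℕ} (hle : j ≤ j') (h : (i, j') ∈ Y) :
    uOf Y T i j ≤ uOf Y T i j' := by
  obtain ⟨d, rfl⟩ := Nat.exists_eq_add_of_le hle
  clear hle
  induction d with
  | zero => exact le_refl _
  | succ d ih =>
    have h' : (i, j + d) ∈ Y := Y.up_left_mem le_rfl (by omega) h
    have hstep := row_step hT1 hT2 (i := i) (j := j + d) (by
      have he : j + (d + 1) = (j + d) + 1 := by omega
      rwa [he] at h)
    have he : j + (d + 1) = (j + d) + 1 := by omega
    rw [he]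
    exact le_trans (ih h') hstep.1

lemma below_pos
    (hT3 : ∀ c d : Y.cells, (d : ℕ × ℕ).1 = (c : ℕ × ℕ).1 + 1 → (c : ℕ × ℕ).2 = (d : ℕ × ℕ).2 →
        T c ≤ T d)
    (hT4 : ∀ c d : Y.cells, (d : ℕ × ℕ).1 = (c : ℕ × ℕ).1 + 1 → (c : ℕ × ℕ).2 = (d : ℕ × ℕ).2 →
        (T c).val < 2 → T c < T d)
    {i j : ℕ} (h : (i + 1, j) ∈ Y) : 1 ≤ uOf Y T (i + 1) j := by
  have := col_step hT3 hT4 h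
  omega

lemma deep_two
    (hT3 : ∀ c d : Y.cells, (d : ℕ × ℕ).1 = (c : ℕ × ℕ).1 + 1 → (c : ℕ × ℕ).2 = (d : ℕ × ℕ).2 →
        T c ≤ T d)
    (hT4 : ∀ c d : Y.cells, (d : ℕ × ℕ).1 = (c : ℕ × ℕ).1 + 1 → (c : ℕ × ℕ).2 = (d : ℕ × ℕ).2 →
        (T c).val < 2 → T c < T d)
    {i j : ℕ} (h : (i + 2, j) ∈ Y) : uOf Y T (i + 2) j = 2 := by
  have h1 : (i + 1, j) ∈ Y := Y.up_left_mem (by omega) le_rfl h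
  have hb := below_pos hT3 hT4 (h1 : (i + 1, j) ∈ Y)
  have hc := col_step hT3 hT4 (i := i + 1) (j := j) h
  rw [show i + 1 + 1 = i + 2 from by omega] at hc
  have := uOf_lt3 Y T (i + 2) j
  omega

end conds

lemma mkTab_conds (Y : YoungDiagram) (R : ℕ → ℕ)
    (hmem : ∀ i j : ℕ, (i, j) ∈ Y ↔ j < R i) (hR2 : ∀ i, 2 ≤ i → R i ≤ 1)
    (p ε ε' : ℕ) (hε : ε ≤ 1) (hε' : ε' ≤ 1) (hbp : R 1 - ε' ≤ p) (hpa : p + ε ≤ R 0) :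
    (∀ c d : Y.cells, (c : ℕ × ℕ).1 = (d : ℕ × ℕ).1 → (d : ℕ × ℕ).2 = (c : ℕ × ℕ).2 + 1 →
        mkTab Y (R 0) (R 1) p ε ε' c ≤ mkTab Y (R 0) (R 1) p ε ε' d) ∧
    (∀ c d : Y.cells, (c : ℕ × ℕ).1 = (d : ℕ × ℕ).1 → (d : ℕ × ℕ).2 = (c : ℕ × ℕ).2 + 1 →
        2 ≤ (mkTab Y (R 0) (R 1) p ε ε' c).val →
          mkTab Y (R 0) (R 1) p ε ε' c < mkTab Y (R 0) (R 1) p ε ε' d) ∧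
    (∀ c d : Y.cells, (d : ℕ × ℕ).1 = (c : ℕ × ℕ).1 + 1 → (c : ℕ × ℕ).2 = (d : ℕ × ℕ).2 →
        mkTab Y (R 0) (R 1) p ε ε' c ≤ mkTab Y (R 0) (R 1) p ε ε' d) ∧
    (∀ c d : Y.cells, (d : ℕ × ℕ).1 = (c : ℕ × ℕ).1 + 1 → (c : ℕ × ℕ).2 = (d : ℕ × ℕ).2 →
        (mkTab Y (R 0) (R 1) p ε ε' c).val < 2 →
          mkTab Y (R 0) (R 1) p ε ε' c < mkTab Y (R 0) (R 1) p ε ε' d) := by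
  have memc : ∀ i j : ℕ, ((i, j) ∈ Y.cells) ↔ j < R i := fun i j =>
    (YoungDiagram.mem_cells _).trans (hmem i j)
  refine ⟨?_, ?_, ?_, ?_⟩ <;>
  · rintro ⟨⟨i, j⟩, hc⟩ ⟨⟨i', j'⟩, hd⟩ h1 h2
    simp only at h1 h2
    subst h1
    subst h2
    rw [memc] at hc hd
    simp only [mkTab, hf0, hf1]
    rcases i with _ | _ | i
    · norm_num at hc hd ⊢
      split_ifs <;> first | (intro; omega) | omega
    · norm_num at hc hd ⊢
      split_ifs <;> first | (intro; omega) | omega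
    · have hr := hR2 (i + 1 + 1) (by omega)
      have hr3 := hR2 (i + 1 + 1 + 1) (by omega)
      norm_num at *
      all_goals first | omega | (split_ifs <;> first | (intro; omega) | omega)

lemma sSuper21_of_rows (Y : YoungDiagram) (R : ℕ → ℕ)
    (hmem : ∀ i j : ℕ, (i, j) ∈ Y ↔ j < R i)
    (hR2 : ∀ i, 2 ≤ i → R i ≤ 1) (hb : 1 ≤ R 1) (hba : R 1 ≤ R 0) :
    sSuper 2 1 Y = 4 * (R 0 - R 1 + 1) := by
  classical
  have ha1 : 1 ≤ R 0 := le_trans hb hba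
  let F : {x : Fin 2 × Fin (R 0 + 1) × Fin 2 //
      R 1 - x.1.val ≤ x.2.1.val ∧ x.2.1.val + x.2.2.val ≤ R 0} →
      {T : Y.cells → Fin (2 + 1) //
      (∀ c d : Y.cells, (c : ℕ × ℕ).1 = (d : ℕ × ℕ).1 → (d : ℕ × ℕ).2 = (c : ℕ × ℕ).2 + 1 →
          T c ≤ T d) ∧
      (∀ c d : Y.cells, (c : ℕ × ℕ).1 = (d : ℕ × ℕ).1 → (d : ℕ × ℕ).2 = (c : ℕ × ℕ).2 + 1 →
          2 ≤ (T c).val → T c < T d) ∧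
      (∀ c d : Y.cells, (d : ℕ × ℕ).1 = (c : ℕ × ℕ).1 + 1 → (c : ℕ × ℕ).2 = (d : ℕ × ℕ).2 →
          T c ≤ T d) ∧
      (∀ c d : Y.cells, (d : ℕ × ℕ).1 = (c : ℕ × ℕ).1 + 1 → (c : ℕ × ℕ).2 = (d : ℕ × ℕ).2 →
          (T c).val < 2 → T c < T d)} :=
    fun x => ⟨mkTab Y (R 0) (R 1) x.1.2.1.val x.1.2.2.val x.1.1.val,
      mkTab_conds Y R hmem hR2 _ _ _ (by omega) (by omega) x.2.1 x.2.2⟩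
  have hbij : Function.Bijective F := by
    constructor
    · -- injectivity
      rintro ⟨⟨e1, p1, g1⟩, hx1, hx2⟩ ⟨⟨e2, p2, g2⟩, hy1, hy2⟩ heq
      simp only [F, Subtype.mk.injEq] at heq
      have hcell : ∀ (i j : ℕ) (h : (i, j) ∈ Y),
          mkTab Y (R 0) (R 1) p1.val g1.val e1.val ⟨(i, j), (YoungDiagram.mem_cells _).mpr h⟩ =
          mkTab Y (R 0) (R 1) p2.val g2.val e2.val ⟨(i, j), (YoungDiagram.mem_cells _).mpr h⟩ :=
        fun i j h => congrFun heq _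
      have hrow0 : ∀ j < R 0, hf0 (R 0) p1.val g1.val j = hf0 (R 0) p2.val g2.val j := by
        intro j hj
        have := hcell 0 j ((hmem 0 j).mpr hj)
        simpa [mkTab] using this
      obtain ⟨hp, hg⟩ := hf0_inj (R 0) ha1 _ _ _ _ (by omega) (by omega) hx2 hy2 hrow0
      have hrow1 : hf1 (R 1) e1.val (R 1 - 1) = hf1 (R 1) e2.val (R 1 - 1) := by
        have := hcell 1 (R 1 - 1) ((hmem 1 (R 1 - 1)).mpr (by omega))
        simpa [mkTab] using this
      have he := hf1_inj (R 1) hb _ _ (by omega) (by omega) hrow1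
      apply Subtype.ext
      simp only [Prod.ext_iff, Fin.ext_iff]
      exact ⟨he, hp, hg⟩
    · -- surjectivity
      rintro ⟨T, hT1, hT2, hT3, hT4⟩
      set S : Finset ℕ := (Finset.range (R 0)).filter (fun j => uOf Y T 0 j = 0) with hS
      have hSr : S = Finset.range S.card := by
        apply lowerSet_eq_range
        intro j' hj' j hjle
        simp only [hS, Finset.mem_filter, Finset.mem_range] at hj' ⊢
        obtain ⟨hj'a, hj'0⟩ := hj'
        refine ⟨by omega, ?_⟩
        have h1 : (0, j') ∈ Y := (hmem 0 j').mpr hj'a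
        have := row_mono hT1 hT2 hjle h1
        omega
      have hple : S.card ≤ R 0 := by
        calc S.card ≤ (Finset.range (R 0)).card := by rw [hS]; exact Finset.card_filter_le _ _
        _ = R 0 := Finset.card_range _
      have hp_iff : ∀ j, j < R 0 → (uOf Y T 0 j = 0 ↔ j < S.card) := by
        intro j hj
        constructor
        · intro h0
          have hjS : j ∈ S := by
            rw [hS]
            simp only [Finset.mem_filter, Finset.mem_range]
            exact ⟨hj, h0⟩
          rw [hSr] at hjS
          simpa using hjS
        · intro hlt
          have hjS : j ∈ S := by rw [hSr]; simpa using hlt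
          rw [hS] at hjS
          simp only [Finset.mem_filter, Finset.mem_range] at hjS
          exact hjS.2
      set ε : ℕ := if uOf Y T 0 (R 0 - 1) = 2 then 1 else 0 with hεdef
      set ε' : ℕ := if uOf Y T 1 (R 1 - 1) = 2 then 1 else 0 with hε'def
      have hεle : ε ≤ 1 := by rw [hεdef]; split_ifs <;> omega
      have hε'le : ε' ≤ 1 := by rw [hε'def]; split_ifs <;> omega
      clear_value ε ε'
      have h2iff : ∀ j, j < R 0 → (uOf Y T 0 j = 2 ↔ ε = 1 ∧ j = R 0 - 1) := by
        intro j hj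
        constructor
        · intro h2
          have hend : j = R 0 - 1 := by
            by_contra hne
            have hmem' : (0, j + 1) ∈ Y := (hmem 0 (j + 1)).mpr (by omega)
            have := (row_step hT1 hT2 hmem').2
            omega
          subst hend
          rw [hεdef, if_pos h2]
          exact ⟨rfl, rfl⟩
        · rintro ⟨hε1, rfl⟩
          by_cases hcc : uOf Y T 0 (R 0 - 1) = 2
          · exact hcc
          · rw [hεdef, if_neg hcc] at hε1
            omega
      have h1pos : ∀ j, j < R 1 → 1 ≤ uOf Y T 1 j := by
        intro j hj
        have h1Y : (0 + 1, j) ∈ Y := by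
          rw [show (0 : ℕ) + 1 = 1 from rfl]
          exact (hmem 1 j).mpr hj
        have := below_pos hT3 hT4 h1Y
        rwa [show (0 : ℕ) + 1 = 1 from rfl] at this
      have h1two : ∀ j, j < R 1 → (uOf Y T 1 j = 2 ↔ ε' = 1 ∧ j = R 1 - 1) := by
        intro j hj
        constructor
        · intro h2
          have hend : j = R 1 - 1 := by
            by_contra hne
            have hmem' : (1, j + 1) ∈ Y := (hmem 1 (j + 1)).mpr (by omega)
            have := (row_step hT1 hT2 hmem').2
            omega
          subst hend
          rw [hε'def, if_pos h2]
          exact ⟨rfl, rfl⟩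
        · rintro ⟨hε1, rfl⟩
          by_cases hcc : uOf Y T 1 (R 1 - 1) = 2
          · exact hcc
          · rw [hε'def, if_neg hcc] at hε1
            omega
      have hpa : S.card + ε ≤ R 0 := by
        by_cases hc2 : uOf Y T 0 (R 0 - 1) = 2
        · have hnlt : ¬ (R 0 - 1 < S.card) := by
            intro hlt
            have := (hp_iff (R 0 - 1) (by omega)).mpr hlt
            omega
          have hε1 : ε = 1 := by rw [hεdef, if_pos hc2]
          omega
        · have hε0 : ε = 0 := by rw [hεdef, if_neg hc2]
          omega
      have hbp : R 1 - ε' ≤ S.card := by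
        have hz : ∀ j, j < R 1 - ε' → j < S.card := by
          intro j hj
          have hjb : j < R 1 := by omega
          have h1Y : (0 + 1, j) ∈ Y := by
            rw [show (0 : ℕ) + 1 = 1 from rfl]
            exact (hmem 1 j).mpr hjb
          have hcs := col_step hT3 hT4 h1Y
          rw [show (0 : ℕ) + 1 = 1 from rfl] at hcs
          have hu1 : uOf Y T 1 j = 1 := by
            have hpos := h1pos j hjb
            have hlt3 := uOf_lt3 Y T 1 j
            have hne : uOf Y T 1 j ≠ 2 := by
              intro h2
              obtain ⟨he', hj'⟩ := (h1two j hjb).mp h2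
              omega
            omega
          have hu0 : uOf Y T 0 j = 0 := by omega
          exact (hp_iff j (lt_of_lt_of_le hjb hba)).mp hu0
        rcases Nat.eq_zero_or_pos (R 1 - ε') with h | h
        · omega
        · have := hz (R 1 - ε' - 1) (by omega)
          omega
      refine ⟨⟨⟨⟨ε', by omega⟩, ⟨S.card, by omega⟩, ⟨ε, by omega⟩⟩, hbp, hpa⟩, ?_⟩
      have key : ∀ (i j : ℕ) (hyp : (i, j) ∈ Y),
          (mkTab Y (R 0) (R 1) S.card ε ε' ⟨(i, j), (YoungDiagram.mem_cells _).mpr hyp⟩).val =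
            uOf Y T i j := by
        intro i j hyp
        have hja0 : j < R i := (hmem i j).mp hyp
        rcases i with _ | _ | i
        · have hja : j < R 0 := hja0
          show (hf0 (R 0) S.card ε j).val = uOf Y T 0 j
          simp only [hf0]
          by_cases h1 : j < S.card
          · rw [if_pos h1]
            have := (hp_iff j hja).mpr h1
            omega
          · rw [if_neg h1]
            by_cases h2 : j < R 0 - ε
            · rw [if_pos h2]
              have hne0 := (hp_iff j hja)
              have hne2 := (h2iff j hja)
              have hlt3 := uOf_lt3 Y T 0 j
              rcases Nat.lt_or_ge (uOf Y T 0 j) 2 with h | h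
              · omega
              · have h2' : uOf Y T 0 j = 2 := by omega
                obtain ⟨hee, hjj⟩ := hne2.mp h2'
                omega
            · rw [if_neg h2]
              have h2' : uOf Y T 0 j = 2 := (h2iff j hja).mpr (by omega)
              omega
        · have hja : j < R 1 := hja0
          show (hf1 (R 1) ε' j).val = uOf Y T 1 j
          simp only [hf1]
          by_cases h1 : j < R 1 - ε'
          · rw [if_pos h1]
            have hpos := h1pos j hja
            have hlt3 := uOf_lt3 Y T 1 j
            have hne : uOf Y T 1 j ≠ 2 := by
              intro h2
              obtain ⟨he', hj'⟩ := (h1two j hja).mp h2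
              omega
            omega
          · rw [if_neg h1]
            have h2' : uOf Y T 1 j = 2 := (h1two j hja).mpr (by omega)
            omega
        · show (2 : Fin 3).val = uOf Y T (i + 1 + 1) j
          have hyp' : (i + 2, j) ∈ Y := by
            rw [show i + 2 = i + 1 + 1 from by omega]
            exact hyp
          have := deep_two hT3 hT4 hyp'
          rw [show i + 1 + 1 = i + 2 from by omega]
          omega
      apply Subtype.ext
      simp only [F]
      funext c
      obtain ⟨⟨i, j⟩, hcc⟩ := c
      have hRij : (i, j) ∈ Y := (YoungDiagram.mem_cells _).mp hcc
      have hkey := key i j hRij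
      rw [uOf_pos Y T hRij] at hkey
      exact Fin.val_injective hkey
  have hrfl : sSuper 2 1 Y = Nat.card {T : Y.cells → Fin (2 + 1) //
      (∀ c d : Y.cells, (c : ℕ × ℕ).1 = (d : ℕ × ℕ).1 → (d : ℕ × ℕ).2 = (c : ℕ × ℕ).2 + 1 →
          T c ≤ T d) ∧
      (∀ c d : Y.cells, (c : ℕ × ℕ).1 = (d : ℕ × ℕ).1 → (d : ℕ × ℕ).2 = (c : ℕ × ℕ).2 + 1 →
          2 ≤ (T c).val → T c < T d) ∧
      (∀ c d : Y.cells, (d : ℕ × ℕ).1 = (c : ℕ × ℕ).1 + 1 → (c : ℕ × ℕ).2 = (d : ℕ × ℕ).2 →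
          T c ≤ T d) ∧
      (∀ c d : Y.cells, (d : ℕ × ℕ).1 = (c : ℕ × ℕ).1 + 1 → (c : ℕ × ℕ).2 = (d : ℕ × ℕ).2 →
          (T c).val < 2 → T c < T d)} := rfl
  rw [hrfl, ← Nat.card_eq_of_bijective F hbij]
  clear hbij hrfl F
  rw [Nat.card_eq_fintype_card, Fintype.card_subtype, Finset.card_filter]
  rw [Fintype.sum_prod_type]
  simp only [Fintype.sum_prod_type]
  rw [Fin.sum_univ_two]
  simp only [Fin.sum_univ_two, Fin.val_zero, Fin.val_one]
  rw [Finset.sum_add_distrib, Finset.sum_add_distrib]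
  have c1 := count_interval (R 0) (R 1 - 0) 0 (by omega)
  have c2 := count_interval (R 0) (R 1 - 0) 1 (by omega)
  have c3 := count_interval (R 0) (R 1 - 1) 0 (by omega)
  have c4 := count_interval (R 0) (R 1 - 1) 1 (by omega)
  rw [c1, c2, c3, c4]
  omega

/-- for `λ ⊢ n` with `λ₃ ≤ 1 ≤ λ₂`, `s_{2,1}(λ) = 4(λ₁ - λ₂ + 1)`. -/
theorem s21_hook (n : ℕ) (lam : n.Partition)
    (h3 : partNth lam.parts 2 ≤ 1) (h2 : 1 ≤ partNth lam.parts 1) :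
    sSuper 2 1 (toYoung lam) = 4 * (partNth lam.parts 0 - partNth lam.parts 1 + 1) := by
  have hanti : ∀ i i' : ℕ, i ≤ i' → partNth lam.parts i' ≤ partNth lam.parts i := by
    intro i i' h
    unfold partNth
    have hs : (lam.parts.sort (· ≥ ·)).Pairwise (· ≥ ·) := Multiset.pairwise_sort _ _
    by_cases hi' : i' < (lam.parts.sort (· ≥ ·)).length
    · have hi : i < (lam.parts.sort (· ≥ ·)).length := lt_of_le_of_lt h hi'
      rw [List.getD_eq_getElem _ _ hi', List.getD_eq_getElem _ _ hi]
      rcases eq_or_lt_of_le h with rfl | hlt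
      · exact le_refl _
      · exact hs.rel_get_of_lt (a := ⟨i, hi⟩) (b := ⟨i', hi'⟩) hlt
    · rw [List.getD_eq_default _ _ (by omega)]
      exact Nat.zero_le _
  have hmem : ∀ i j : ℕ, (i, j) ∈ toYoung lam ↔ j < partNth lam.parts i := by
    intro i j
    rw [toYoung, YoungDiagram.mem_ofRowLens]
    unfold partNth
    constructor
    · rintro ⟨h1, h2'⟩
      rwa [List.getD_eq_getElem _ _ h1]
    · intro h
      have h1 : i < (lam.parts.sort (· ≥ ·)).length := by
        by_contra hc
        rw [List.getD_eq_default _ _ (by omega)] at h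
        omega
      exact ⟨h1, by rwa [List.getD_eq_getElem _ _ h1] at h⟩
  exact sSuper21_of_rows (toYoung lam) (fun i => partNth lam.parts i) hmem
    (fun i hi => le_trans (hanti 2 i hi) h3) h2 (hanti 0 1 (by omega))
end
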